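/- The set H = {0, 12, 19, 24, 28, 31, 34, 36, 38, 40, 42, 43} ∪ {n ∈ ℕ : n ≥ 45} is a numerical semigroup of multiplicity 12, and it is simultaneously a discretization of L and of F with multiplicity 12: H = ⌊12L⌋_{0.40} = ⌊12F⌋_{1.00}, where ⌊12F⌋_{1.00} = {⌊12·φ_i⌋ : i ∈ ℕ} is the flooring discretization of F. -/

import Mathlib

/-- The sequence `λ_i = log₂ (i + 1)`. -/
noncomputable def Lseq : ℕ → ℝ := fun i => Real.logb 2 (i + 1)

/-- The golden ratio `φ = (1 + √5) / 2`. -/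
noncomputable def phi : ℝ := (1 + Real.sqrt 5) / 2

/-- Given `p ∈ (0,1)` (with `q = 1 - p`), the recursively defined division functions
`f_ℓ : {0, …, 2^ℓ - 1} → [0, 1)`:
`f₀ 0 = 0`, `f_{ℓ+1} n = p * f_ℓ n` if `n < 2^ℓ`, and `f_{ℓ+1} n = p + q * f_ℓ (n - 2^ℓ)`
otherwise. -/
noncomputable def fcut (p : ℝ) : ℕ → ℕ → ℝ
  | 0, _ => 0
  | ℓ + 1, n => if n < 2 ^ ℓ then p * fcut p ℓ n else p + (1 - p) * fcut p ℓ (n - 2 ^ ℓ)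

/-- The golden fractal mold `F`:
`φ_i = ⌊log₂ (i+1)⌋ + f_{⌊log₂ (i+1)⌋} (i + 1 - 2 ^ ⌊log₂ (i+1)⌋)` with `p = φ - 1`.
(Here `⌊log₂ (i+1)⌋ = Nat.log 2 (i+1)`.) -/
noncomputable def Fgold : ℕ → ℝ := fun i =>
  (Nat.log 2 (i + 1) : ℝ) +
    fcut (phi - 1) (Nat.log 2 (i + 1)) (i + 1 - 2 ^ Nat.log 2 (i + 1))

/-- Rounding by `α`: `⌊r⌋_α = ⌊r⌋` if `r - ⌊r⌋ < α`, and `⌈r⌉` otherwise. -/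
noncomputable def floorAlpha (r α : ℝ) : ℤ := if r - ⌊r⌋ < α then ⌊r⌋ else ⌈r⌉

/-- The discretization `⌊mM⌋_α = {⌊m μ_i⌋_α : i ∈ ℕ}` of a mold `μ`, as a set of
natural numbers. -/
noncomputable def discr (μ : ℕ → ℝ) (m : ℕ) (α : ℝ) : Set ℕ :=
  {n : ℕ | ∃ i : ℕ, (n : ℤ) = floorAlpha ((m : ℝ) * μ i) α}

/-- A numerical semigroup: a subset of `ℕ` containing `0`, with finite complement,
closed under addition. -/
def IsNumSgp (S : Set ℕ) : Prop :=
  0 ∈ S ∧ Sᶜ.Finite ∧ ∀ a ∈ S, ∀ b ∈ S, a + b ∈ S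

/-- The well tempered harmonic semigroup
`H = {0, 12, 19, 24, 28, 31, 34, 36, 38, 40, 42, 43} ∪ {n : n ≥ 45}`. -/
def Hsgp : Set ℕ :=
  ({0, 12, 19, 24, 28, 31, 34, 36, 38, 40, 42, 43} : Set ℕ) ∪ {n : ℕ | 45 ≤ n}

/-!
Since `⌊x⌋_α = ⌊x + 1 - α⌋`, the value `⌊12 log₂ k⌋_{0.40}` equals `n` exactly when
`2^(5n-3) ≤ k^60 < 2^(5n+2)`, a statement about integers. Below `50` it is decided by
computation; from `50` on, the least `k` with `2^(5n-3) ≤ k^60` is at least `18`, and since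
`(18/17)^60 < 2^5` it also satisfies the upper bound.

For `F`, the term of index `2^l + r - 1` is `l + f_l(r)`, and `f_{l+d}(r 2^d) = f_l(r)`. Hence
`⌊12F⌋` consists of the values `12l + ⌊12 f_l(r)⌋` with `l ≤ 3`, all below `48`, together with
`12l + ⌊12 f_4(j)⌋` for `l ≥ 4`, `j < 16`. The sixteen numbers `⌊12 f_4(j)⌋` follow from
`0.618 ≤ φ - 1 ≤ 0.619`, because `f_l(n)` is monotone in `p`; they meet every residue mod `12`.
-/

def HsgpSmall : Finset ℕ := {0, 12, 19, 24, 28, 31, 34, 36, 38, 40, 42, 43}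

lemma mem_Hsgp_iff {n : ℕ} : n ∈ Hsgp ↔ n ∈ HsgpSmall ∨ 45 ≤ n := by
  simp [Hsgp, HsgpSmall]

lemma isNumSgp_Hsgp : IsNumSgp Hsgp := by
  refine ⟨by simp [Hsgp], (Set.finite_Iio 45).subset fun n hn => ?_, fun a ha b hb => ?_⟩
  · rw [Set.mem_compl_iff, mem_Hsgp_iff, not_or] at hn
    exact Set.mem_Iio.mpr (not_le.mp hn.2)
  · have hsmall : ∀ a ∈ HsgpSmall, ∀ b ∈ HsgpSmall, a + b ∈ HsgpSmall ∨ 45 ≤ a + b := by decide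
    rw [mem_Hsgp_iff] at ha hb ⊢
    rcases ha with ha | ha <;> rcases hb with hb | hb
    exacts [hsmall a ha b hb, Or.inr (by omega), Or.inr (by omega), Or.inr (by omega)]

lemma sInf_setOf_mem_Hsgp_ne_zero : sInf {n : ℕ | n ∈ Hsgp ∧ n ≠ 0} = 12 := by
  refine IsLeast.csInf_eq ⟨⟨by simp [Hsgp], by norm_num⟩, fun m ⟨hm, hm₀⟩ => ?_⟩
  rw [mem_Hsgp_iff] at hm
  have hsmall : ∀ m ∈ HsgpSmall, m ≠ 0 → 12 ≤ m := by decide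
  rcases hm with hm | hm
  exacts [hsmall m hm hm₀, by omega]

lemma floorAlpha_eq_floor_add {r α : ℝ} (hα₀ : 0 < α) (hα₁ : α ≤ 1) :
    floorAlpha r α = ⌊r + (1 - α)⌋ := by
  unfold floorAlpha
  symm
  split_ifs with h
  · rw [Int.floor_eq_iff]
    constructor <;> linarith [Int.floor_le r]
  · have hceil : (⌈r⌉ : ℝ) ≤ ⌊r⌋ + 1 := by exact_mod_cast Int.ceil_le_floor_add_one r
    rw [Int.floor_eq_iff]
    constructor <;> linarith [Int.le_ceil r]

lemma floorAlpha_one (r : ℝ) : floorAlpha r 1 = ⌊r⌋ := by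
  simp [floorAlpha_eq_floor_add one_pos le_rfl]

lemma floorAlpha_twelve_mul_logb_eq_iff {k : ℕ} (hk : k ≠ 0) (n : ℕ) :
    floorAlpha (12 * Real.logb 2 k) 0.40 = n ↔ 32 ^ n ≤ 8 * k ^ 60 ∧ k ^ 60 < 4 * 32 ^ n := by
  have h₁ : 32 ^ n ≤ 8 * k ^ 60 ↔ Real.logb 2 (2 ^ (5 * n)) ≤ Real.logb 2 (2 ^ 3 * k ^ 60) := by
    rw [Real.logb_le_logb one_lt_two (by positivity) (by positivity), ← Nat.cast_le (α := ℝ)]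
    norm_num [pow_mul]
  have h₂ : k ^ 60 < 4 * 32 ^ n ↔ Real.logb 2 (k ^ 60) < Real.logb 2 (2 ^ 2 * 2 ^ (5 * n)) := by
    rw [Real.logb_lt_logb_iff one_lt_two (by positivity) (by positivity), ← Nat.cast_lt (α := ℝ)]
    norm_num [pow_mul]
  rw [floorAlpha_eq_floor_add (by norm_num) (by norm_num), Int.floor_eq_iff, h₁, h₂,
    Real.logb_mul (by positivity) (by positivity), Real.logb_mul (by positivity) (by positivity)]
  simp only [Real.logb_pow, Real.logb_self_eq_one one_lt_two]
  push_cast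
  constructor <;> rintro ⟨_, _⟩ <;> constructor <;> linarith

lemma mem_discr_Lseq_iff {n : ℕ} :
    n ∈ discr Lseq 12 0.40 ↔ ∃ k, 32 ^ n ≤ 8 * k ^ 60 ∧ k ^ 60 < 4 * 32 ^ n := by
  have hLseq (i : ℕ) : Lseq i = Real.logb 2 (i + 1 : ℕ) := by simp [Lseq]
  simp only [discr, Set.mem_ofPred_eq, Nat.cast_ofNat, hLseq]
  constructor
  · rintro ⟨i, hi⟩
    exact ⟨i + 1, (floorAlpha_twelve_mul_logb_eq_iff i.succ_ne_zero n).mp hi.symm⟩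
  · rintro ⟨k, hk⟩
    have hk₀ : k ≠ 0 := by
      rintro rfl
      simp at hk
    refine ⟨k - 1, ((floorAlpha_twelve_mul_logb_eq_iff ?_ n).mpr ?_).symm⟩ <;>
      rwa [Nat.sub_add_cancel (Nat.one_le_iff_ne_zero.mpr hk₀)]

lemma exists_pow_sixty_mem_Ico {n : ℕ} (hn : 50 ≤ n) :
    ∃ k, 32 ^ n ≤ 8 * k ^ 60 ∧ k ^ 60 < 4 * 32 ^ n := by
  have hex : ∃ k, 32 ^ n ≤ 8 * k ^ 60 :=
    ⟨32 ^ n, (Nat.le_self_pow (by norm_num) _).trans (Nat.le_mul_of_pos_left _ (by norm_num))⟩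
  set k := Nat.find hex
  have hspec : 32 ^ n ≤ 8 * k ^ 60 := Nat.find_spec hex
  refine ⟨k, hspec, ?_⟩
  have h50 : 8 * 17 ^ 60 < 32 ^ n :=
    lt_of_lt_of_le (by norm_num) (Nat.pow_le_pow_right (by norm_num) hn)
  have hk : 18 ≤ k := by
    by_contra! hk
    have := Nat.pow_le_pow_left (Nat.le_of_lt_succ hk) 60
    linarith
  have hmin : 8 * (k - 1) ^ 60 < 32 ^ n := not_le.mp (Nat.find_min hex (by omega))
  have hstep : k ^ 60 ≤ 32 * (k - 1) ^ 60 := by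
    refine Nat.le_of_mul_le_mul_left ?_ (by norm_num : 0 < 17 ^ 60)
    calc 17 ^ 60 * k ^ 60 = (17 * k) ^ 60 := (mul_pow ..).symm
      _ ≤ (18 * (k - 1)) ^ 60 := Nat.pow_le_pow_left (by omega) 60
      _ = 18 ^ 60 * (k - 1) ^ 60 := mul_pow ..
      _ ≤ 17 ^ 60 * (32 * (k - 1) ^ 60) := by rw [← mul_assoc]; gcongr; norm_num
  linarith

theorem Hsgp_eq_discr_Lseq : Hsgp = discr Lseq 12 0.40 := by
  have hsmall : ∀ n < 50, n ∈ HsgpSmall ∨ 45 ≤ n ↔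
      ∃ k < 18, 32 ^ n ≤ 8 * k ^ 60 ∧ k ^ 60 < 4 * 32 ^ n := by
    decide
  ext n
  rw [mem_discr_Lseq_iff, mem_Hsgp_iff]
  rcases lt_or_ge n 50 with hn | hn
  · rw [hsmall n hn]
    refine ⟨fun ⟨k, _, hk⟩ => ⟨k, hk⟩, fun ⟨k, hk⟩ => ⟨k, ?_, hk⟩⟩
    refine (Nat.pow_lt_pow_iff_left (by norm_num : 60 ≠ 0)).mp (hk.2.trans_le ?_)
    calc 4 * 32 ^ n ≤ 4 * 32 ^ 49 := by gcongr <;> omega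
      _ ≤ 18 ^ 60 := by norm_num
  · exact iff_of_true (Or.inr (by omega)) (exists_pow_sixty_mem_Ico hn)

section fcut

variable {p p' : ℝ}

lemma fcut_succ (l n : ℕ) : fcut p (l + 1) n =
    if n < 2 ^ l then p * fcut p l n else p + (1 - p) * fcut p l (n - 2 ^ l) := rfl

lemma fcut_nonneg (hp₀ : 0 ≤ p) (hp₁ : p ≤ 1) (l n : ℕ) : 0 ≤ fcut p l n := by
  induction l generalizing n with
  | zero => exact le_rfl
  | succ l ih =>
    rw [fcut_succ]
    split_ifs
    · exact mul_nonneg hp₀ (ih n)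
    · nlinarith [ih (n - 2 ^ l)]

lemma fcut_le_one (hp₀ : 0 ≤ p) (hp₁ : p ≤ 1) (l n : ℕ) : fcut p l n ≤ 1 := by
  induction l generalizing n with
  | zero => exact zero_le_one
  | succ l ih =>
    rw [fcut_succ]
    split_ifs
    · nlinarith [ih n]
    · nlinarith [ih (n - 2 ^ l)]

lemma fcut_mono (hp₀ : 0 ≤ p) (hpp' : p ≤ p') (hp'₁ : p' ≤ 1) (l n : ℕ) :
    fcut p l n ≤ fcut p' l n := by
  induction l generalizing n with
  | zero => exact le_rfl
  | succ l ih =>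
    rw [fcut_succ, fcut_succ]
    split_ifs
    · exact mul_le_mul hpp' (ih n) (fcut_nonneg hp₀ (hpp'.trans hp'₁) l n) (hp₀.trans hpp')
    · have := ih (n - 2 ^ l)
      have := fcut_le_one (hp₀.trans hpp') hp'₁ l (n - 2 ^ l)
      nlinarith

lemma fcut_two_mul {l n : ℕ} (hn : n < 2 ^ l) : fcut p (l + 1) (2 * n) = fcut p l n := by
  induction l generalizing n with
  | zero => simp_all [fcut]
  | succ l ih =>
    have hpow : 2 ^ (l + 1) = 2 * 2 ^ l := by ring
    rw [fcut_succ (l + 1) (2 * n), fcut_succ l n]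
    by_cases h : n < 2 ^ l
    · rw [if_pos (by omega), if_pos h, ih h]
    · rw [if_neg (by omega), if_neg h, show 2 * n - 2 ^ (l + 1) = 2 * (n - 2 ^ l) by omega,
        ih (by omega)]

lemma fcut_mul_two_pow {l r : ℕ} (hr : r < 2 ^ l) (d : ℕ) :
    fcut p (l + d) (r * 2 ^ d) = fcut p l r := by
  induction d with
  | zero => simp
  | succ d ih =>
    have : r * 2 ^ d < 2 ^ (l + d) := by
      rw [pow_add]; exact Nat.mul_lt_mul_of_pos_right hr (by positivity)
    rw [← add_assoc, pow_succ, ← mul_assoc, mul_comm _ 2, fcut_two_mul this, ih]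

end fcut

lemma phi_sub_one_mem_Icc : phi - 1 ∈ Set.Icc 0.618 0.619 := by
  have h5 := Real.sq_sqrt (show (0 : ℝ) ≤ 5 by norm_num)
  have h₀ := Real.sqrt_nonneg 5
  unfold phi
  constructor <;> nlinarith

def goldenDigits : List ℕ := [0, 1, 2, 3, 4, 5, 6, 7, 7, 8, 9, 9, 10, 10, 11, 11]

lemma floor_twelve_mul_fcut_four {j : ℕ} (hj : j < 16) :
    ⌊12 * fcut (phi - 1) 4 j⌋ = goldenDigits.getD j 0 := by
  obtain ⟨hlo, hhi⟩ := phi_sub_one_mem_Icc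
  have lower := fcut_mono (by norm_num) hlo (by linarith) 4 j
  have upper := fcut_mono (by linarith) hhi (by norm_num) 4 j
  rw [Int.floor_eq_iff]
  interval_cases j <;> norm_num [fcut, goldenDigits] at lower upper ⊢ <;> constructor <;> linarith

lemma floor_twelve_mul_fcut_of_le_four {l r : ℕ} (hl : l ≤ 4) (hr : r < 2 ^ l) :
    ⌊12 * fcut (phi - 1) l r⌋ = goldenDigits.getD (r * 2 ^ (4 - l)) 0 := by
  have hj : r * 2 ^ (4 - l) < 16 := by
    calc r * 2 ^ (4 - l) < 2 ^ l * 2 ^ (4 - l) := Nat.mul_lt_mul_of_pos_right hr (by positivity)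
      _ = 16 := by rw [← pow_add, Nat.add_sub_cancel' hl]; rfl
  rw [← floor_twelve_mul_fcut_four hj, ← fcut_mul_two_pow hr, Nat.add_sub_cancel' hl]

lemma Fgold_two_pow_add_sub_one {l r : ℕ} (hr : r < 2 ^ l) :
    Fgold (2 ^ l + r - 1) = l + fcut (phi - 1) l r := by
  have hpos : 0 < 2 ^ l := by positivity
  have hlog : Nat.log 2 (2 ^ l + r) = l :=
    Nat.log_eq_of_pow_le_of_lt_pow (by omega) (by rw [pow_succ]; omega)
  simp only [Fgold, Nat.sub_add_cancel (by omega : 1 ≤ 2 ^ l + r), hlog, Nat.add_sub_cancel_left]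

lemma exists_eq_two_pow_add_sub_one (i : ℕ) : ∃ l r, r < 2 ^ l ∧ i = 2 ^ l + r - 1 := by
  have h₁ := Nat.pow_log_le_self 2 (show i + 1 ≠ 0 by omega)
  have h₂ := Nat.lt_pow_succ_log_self one_lt_two (i + 1)
  refine ⟨Nat.log 2 (i + 1), i + 1 - 2 ^ Nat.log 2 (i + 1), ?_, by omega⟩
  rw [pow_succ] at h₂
  omega

lemma mem_discr_Fgold_iff {n : ℕ} :
    n ∈ discr Fgold 12 1 ↔ ∃ l r, r < 2 ^ l ∧ (n : ℤ) = 12 * l + ⌊12 * fcut (phi - 1) l r⌋ := by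
  have hfloor {l r : ℕ} (hr : r < 2 ^ l) :
      floorAlpha (12 * Fgold (2 ^ l + r - 1)) 1 = 12 * l + ⌊12 * fcut (phi - 1) l r⌋ := by
    rw [floorAlpha_one, Fgold_two_pow_add_sub_one hr, mul_add, ← Int.floor_intCast_add]
    push_cast
    rfl
  simp only [discr, Set.mem_ofPred_eq, Nat.cast_ofNat]
  constructor
  · rintro ⟨i, hi⟩
    obtain ⟨l, r, hr, rfl⟩ := exists_eq_two_pow_add_sub_one i
    exact ⟨l, r, hr, hi.trans (hfloor hr)⟩
  · rintro ⟨l, r, hr, hn⟩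
    exact ⟨2 ^ l + r - 1, hn.trans (hfloor hr).symm⟩

theorem Hsgp_eq_discr_Fgold : Hsgp = discr Fgold 12 1 := by
  obtain ⟨hlo, hhi⟩ := phi_sub_one_mem_Icc
  have hsmall_witness : ∀ n < 48, n ∈ HsgpSmall ∨ 45 ≤ n →
      ∃ l < 4, ∃ r < 2 ^ l, n = 12 * l + goldenDigits.getD (r * 2 ^ (4 - l)) 0 := by
    decide
  have hsmall_values : ∀ l < 4, ∀ r < 2 ^ l,
      12 * l + goldenDigits.getD (r * 2 ^ (4 - l)) 0 ∈ HsgpSmall ∨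
        45 ≤ 12 * l + goldenDigits.getD (r * 2 ^ (4 - l)) 0 := by
    decide
  have hdigits : ∀ k < 12, ∃ j < 16, goldenDigits.getD j 0 = k := by decide
  ext n
  rw [mem_discr_Fgold_iff, mem_Hsgp_iff]
  constructor
  · intro hn
    rcases lt_or_ge n 48 with hn₄₈ | hn₄₈
    · obtain ⟨l, hl, r, hr, rfl⟩ := hsmall_witness n hn₄₈ hn
      refine ⟨l, r, hr, ?_⟩
      rw [floor_twelve_mul_fcut_of_le_four hl.le hr]
      push_cast
      rfl
    · obtain ⟨j, hj, hjk⟩ := hdigits (n % 12) (Nat.mod_lt _ (by norm_num))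
      obtain ⟨d, hd⟩ := Nat.exists_eq_add_of_le (show 4 ≤ n / 12 by omega)
      refine ⟨4 + d, j * 2 ^ d, ?_, ?_⟩
      · rw [pow_add]
        exact Nat.mul_lt_mul_of_pos_right hj (by positivity)
      · rw [fcut_mul_two_pow hj, floor_twelve_mul_fcut_four hj, hjk]
        omega
  · rintro ⟨l, r, hr, hn⟩
    rcases lt_or_ge l 4 with hl | hl
    · rw [floor_twelve_mul_fcut_of_le_four hl.le hr] at hn
      rw [show n = _ by exact_mod_cast hn]
      exact hsmall_values l hl r hr
    · have hfloor : 0 ≤ ⌊12 * fcut (phi - 1) l r⌋ :=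
        Int.floor_nonneg.mpr (mul_nonneg (by norm_num) (fcut_nonneg (by linarith) (by linarith) l r))
      right
      omega

/-- `H` is a numerical semigroup of multiplicity `12`, and it is
simultaneously a discretization of `L` and of `F` with multiplicity `12`:
`H = ⌊12L⌋_{0.40} = ⌊12F⌋_{1.00}` (the latter being the flooring discretization). -/
theorem H_is_discretization :
    IsNumSgp Hsgp ∧
    sInf {n : ℕ | n ∈ Hsgp ∧ n ≠ 0} = 12 ∧
    Hsgp = discr Lseq 12 0.40 ∧
    Hsgp = discr Fgold 12 1 :=
  ⟨isNumSgp_Hsgp, sInf_setOf_mem_Hsgp_ne_zero, Hsgp_eq_discr_Lseq, Hsgp_eq_discr_Fgold⟩
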